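/- Let p, q be coprime positive integers with p < q, let ℓ be a positive integer, and assume τ_ℓ ≤ 3p+3q, where τ_ℓ = 2^{2ℓ-1}. Then rank(A,b) = rank(A) if and only if p ∈ Γ_ℓ or q ∈ Γ_ℓ, where Γ_ℓ = {(2k-1)·τ_ℓ : k a positive integer} and (A,b) denotes the matrix A augmented by the column b. -/

import Mathlib

/-- The `(3p+3q+1) × (3p+3q-τ+1)` matrix whose `n`-th column is the coefficient
vector of `x^(n-1)·(1 + x^τ)` (indices here start at 0). -/
def cornerA (p q τ : ℕ) : Matrix (Fin (3*p+3*q+1)) (Fin (3*p+3*q-τ+1)) ℚ :=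
  Matrix.of fun m n => if (m : ℕ) = (n : ℕ) ∨ (m : ℕ) = (n : ℕ) + τ then 1 else 0

/-- The coefficient vector of `1 + x^(3p) + x^(3q) + x^(3p+3q)`. -/
def cornerb (p q : ℕ) : Fin (3*p+3*q+1) → ℚ :=
  fun m => if (m : ℕ) = 0 ∨ (m : ℕ) = 3*p ∨ (m : ℕ) = 3*q ∨ (m : ℕ) = 3*p+3*q
    then 1 else 0

/-- The augmented matrix `(A, b)`. -/
def cornerAb (p q τ : ℕ) : Matrix (Fin (3*p+3*q+1)) (Fin (3*p+3*q-τ+1+1)) ℚ :=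
  Matrix.of fun m n =>
    if h : (n : ℕ) < 3*p+3*q-τ+1 then cornerA p q τ m ⟨n, h⟩ else cornerb p q m

/-- `Γ_ℓ = {(2k-1)·τ_ℓ : k ∈ ℕ_{>0}}` where `τ_ℓ = 2^{2ℓ-1}`. -/
def GammaL (l : ℕ) : Set ℕ := {m | ∃ k : ℕ, 0 < k ∧ m = (2*k-1) * 2^(2*l-1)}

/-!
Reading a coefficient vector as a polynomial of degree at most `3p+3q`, the columns of `A` become
`X^n (X^τ + 1)` and `b` becomes `(X^{3p} + 1)(X^{3q} + 1)`. Since `X^τ + 1` is monic, the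
polynomials of degree at most `3p+3q` it divides are exactly the combinations of the columns, so
`rank (A, b) = rank A` iff `X^τ + 1 ∣ (X^{3p} + 1)(X^{3q} + 1)`. As `τ` is a power of two,
`X^τ + 1` is the cyclotomic polynomial `Φ_{2τ}`, the minimal polynomial of a primitive `2τ`-th
root of unity `ζ`; so the divisibility says `ζ^{3p} = -1` or `ζ^{3q} = -1`, i.e.
`3p ≡ τ` or `3q ≡ τ (mod 2τ)`, and `3` can be cancelled because `3τ ≡ τ (mod 2τ)`.
-/

open Polynomial

theorem Matrix.rank_eq_rank_iff_mem_span_cols {m n n' K : Type*} [Fintype m] [Fintype n]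
    [Fintype n'] [Field K] {A : Matrix m n K} {B : Matrix m n' K} {v : m → K}
    (h : Set.range B.col = insert v (Set.range A.col)) :
    B.rank = A.rank ↔ v ∈ Submodule.span K (Set.range A.col) := by
  rw [rank_eq_finrank_span_cols, rank_eq_finrank_span_cols, h]
  refine ⟨fun hrank => ?_, fun hv => by rw [Submodule.span_insert_eq_span hv]⟩
  rw [Submodule.eq_of_le_of_finrank_le (Submodule.span_mono (Set.subset_insert _ _)) hrank.le]
  exact Submodule.subset_span (Set.mem_insert _ _)

theorem Polynomial.mem_span_X_pow_mul_iff_dvd {R : Type*} [CommRing R] {g f : R[X]}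
    (hg : g.Monic) {n : ℕ} (hf : f.degree < ↑(n + g.natDegree)) :
    f ∈ Submodule.span R (Set.range fun i : Fin n => X ^ (i : ℕ) * g) ↔ g ∣ f := by
  constructor
  · intro hmem
    have hle : Submodule.span R (Set.range fun i : Fin n => X ^ (i : ℕ) * g) ≤
        (Ideal.span {g}).restrictScalars R :=
      Submodule.span_le.mpr <|
        Set.range_subset_iff.mpr fun i => Ideal.mem_span_singleton'.mpr ⟨_, rfl⟩
    exact Ideal.mem_span_singleton.mp (hle hmem)
  · rintro ⟨h, rfl⟩
    rcases eq_or_ne h 0 with rfl | hh0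
    · simp
    have hdeg : h.natDegree < n := by
      have := (natDegree_lt_iff_degree_lt (hg.mul_right_ne_zero hh0)).mpr hf
      rw [hg.natDegree_mul' hh0] at this
      omega
    refine (Submodule.mem_span_range_iff_exists_fun R).mpr ⟨fun i => h.coeff i, ?_⟩
    conv_rhs => rw [h.as_sum_range_C_mul_X_pow' hdeg, Finset.mul_sum]
    rw [← Fin.sum_univ_eq_sum_range (fun i => g * (C (h.coeff i) * X ^ i))]
    refine Finset.sum_congr rfl fun i _ => ?_
    rw [smul_eq_C_mul]
    ring

theorem range_cornerAb_col (p q τ : ℕ) :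
    Set.range (cornerAb p q τ).col = insert (cornerb p q) (Set.range (cornerA p q τ).col) := by
  have hlast : (cornerAb p q τ).col (Fin.last _) = cornerb p q := by
    ext m
    simp [cornerAb]
  have hcast : (cornerAb p q τ).col ∘ Fin.castSucc = (cornerA p q τ).col := by
    ext n m
    exact dif_pos n.isLt
  rw [← hlast, ← hcast, Set.range_comp]
  ext v
  simp [Fin.exists_fin_succ', or_comm, eq_comm]

theorem ofFn_cornerA_col {p q τ : ℕ} (hτ0 : 0 < τ) (hτ : τ ≤ 3 * p + 3 * q)
    (n : Fin (3 * p + 3 * q - τ + 1)) :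
    ofFn (3 * p + 3 * q + 1) ((cornerA p q τ).col n) = X ^ (n : ℕ) * (X ^ τ + 1) := by
  have := n.isLt
  ext i
  rcases lt_or_ge i (3 * p + 3 * q + 1) with hi | hi <;>
    simp [hi, cornerA, coeff_X_pow_mul', coeff_X_pow, mul_add] <;> split_ifs <;> norm_num <;> omega

theorem ofFn_cornerb {p q : ℕ} (hp : 0 < p) (hpq : p < q) :
    ofFn (3 * p + 3 * q + 1) (cornerb p q) = (X ^ (3 * p) + 1) * (X ^ (3 * q) + 1) := by
  ext i
  rcases lt_or_ge i (3 * p + 3 * q + 1) with hi | hi <;>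
    simp [hi, cornerb, coeff_X_pow, coeff_one, mul_add, add_mul, ← pow_add] <;> split_ifs <;>
    norm_num <;> omega

theorem cornerb_mem_span_cornerA_col_iff {p q τ : ℕ} (hp : 0 < p) (hpq : p < q) (hτ0 : 0 < τ)
    (hτ : τ ≤ 3 * p + 3 * q) :
    cornerb p q ∈ Submodule.span ℚ (Set.range (cornerA p q τ).col) ↔
      (X ^ τ + 1 : ℚ[X]) ∣ (X ^ (3 * p) + 1) * (X ^ (3 * q) + 1) := by
  have hcols : ofFn (3 * p + 3 * q + 1) ∘ (cornerA p q τ).col =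
      fun n : Fin (3 * p + 3 * q - τ + 1) => X ^ (n : ℕ) * (X ^ τ + 1) :=
    funext (ofFn_cornerA_col hτ0 hτ)
  rw [← Submodule.apply_mem_span_image_iff_mem_span (injective_ofFn _), ← Set.range_comp, hcols,
    ofFn_cornerb hp hpq]
  refine mem_span_X_pow_mul_iff_dvd (monic_X_pow_add_C 1 hτ0.ne') ?_
  rw [natDegree_X_pow_add_C, show 3 * p + 3 * q - τ + 1 + τ = 3 * p + 3 * q + 1 by omega,
    ← ofFn_cornerb hp hpq]
  exact ofFn_degree_lt _

theorem IsPrimitiveRoot.pow_eq_neg_one_iff {R : Type*} [CommRing R] [IsDomain R] {ζ : R}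
    {τ : ℕ} (h : IsPrimitiveRoot ζ (2 * τ)) (hτ : τ ≠ 0) (m : ℕ) :
    ζ ^ m = -1 ↔ m ≡ τ [MOD 2 * τ] := by
  have hneg : ζ ^ τ = -1 := by
    have := h.pow_of_dvd hτ (dvd_mul_left τ 2)
    rw [Nat.mul_div_cancel _ (Nat.pos_of_ne_zero hτ)] at this
    exact this.eq_neg_one_of_two_right
  rw [← hneg, (h.isOfFinOrder (by omega)).pow_eq_pow_iff_modEq, ← h.eq_orderOf]

theorem X_pow_two_pow_add_one_eq_cyclotomic (R : Type*) [CommRing R] (k : ℕ) :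
    (X ^ 2 ^ k + 1 : R[X]) = cyclotomic (2 * 2 ^ k) R := by
  rw [← pow_succ', cyclotomic_prime_pow_eq_geom_sum Nat.prime_two]
  simp [Finset.sum_range_succ, add_comm]

theorem X_pow_two_pow_add_one_dvd_mul_iff (k a b : ℕ) :
    (X ^ 2 ^ k + 1 : ℚ[X]) ∣ (X ^ a + 1) * (X ^ b + 1) ↔
      a ≡ 2 ^ k [MOD 2 * 2 ^ k] ∨ b ≡ 2 ^ k [MOD 2 * 2 ^ k] := by
  obtain ⟨ζ, hζ⟩ : ∃ ζ : ℂ, IsPrimitiveRoot ζ (2 * 2 ^ k) :=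
    ⟨_, Complex.isPrimitiveRoot_exp _ (by positivity)⟩
  rw [X_pow_two_pow_add_one_eq_cyclotomic, cyclotomic_eq_minpoly_rat hζ (by positivity),
    minpoly.dvd_iff]
  simp only [map_mul, map_add, map_pow, aeval_X, map_one, mul_eq_zero, add_eq_zero_iff_eq_neg,
    hζ.pow_eq_neg_one_iff (by positivity)]

theorem Nat.odd_mul_modEq_two_pow_iff {c : ℕ} (hc : Odd c) (k m : ℕ) :
    c * m ≡ 2 ^ k [MOD 2 * 2 ^ k] ↔ m ≡ 2 ^ k [MOD 2 * 2 ^ k] := by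
  obtain ⟨j, rfl⟩ := hc
  have hfix : 2 ^ k ≡ (2 * j + 1) * 2 ^ k [MOD 2 * 2 ^ k] :=
    (Nat.modEq_iff_dvd' (Nat.le_mul_of_pos_left _ (by omega))).mpr
      ⟨j, by rw [add_mul, one_mul, Nat.add_sub_cancel]; ring⟩
  have hcop : Nat.Coprime (2 * 2 ^ k) (2 * j + 1) := by
    rw [← pow_succ']
    exact (Nat.coprime_pow_left_iff (by omega) _ _).mpr (by simp)
  exact ⟨fun h => Nat.ModEq.cancel_left_of_coprime hcop (h.trans hfix),
    fun h => (h.mul_left _).trans hfix.symm⟩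

theorem mem_GammaL_iff (l m : ℕ) :
    m ∈ GammaL l ↔ m ≡ 2 ^ (2 * l - 1) [MOD 2 * 2 ^ (2 * l - 1)] := by
  set τ := 2 ^ (2 * l - 1)
  have hτ : 0 < τ := by positivity
  constructor
  · rintro ⟨k, hk, rfl⟩
    obtain ⟨j, rfl⟩ : ∃ j, k = j + 1 := ⟨k - 1, by omega⟩
    rw [show (2 * (j + 1) - 1) * τ = τ + 2 * τ * j by
      rw [show 2 * (j + 1) - 1 = 2 * j + 1 by omega]; ring]
    exact Nat.add_mul_mod_self_left τ (2 * τ) j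
  · intro h
    refine ⟨m / (2 * τ) + 1, Nat.succ_pos _, ?_⟩
    have hmod : m % (2 * τ) = τ := Eq.trans h (Nat.mod_eq_of_lt (by omega))
    rw [show 2 * (m / (2 * τ) + 1) - 1 = 2 * (m / (2 * τ)) + 1 by omega]
    calc m = 2 * τ * (m / (2 * τ)) + m % (2 * τ) := (Nat.div_add_mod m _).symm
      _ = _ := by rw [hmod]; ring

theorem rank_eq_iff_mem_GammaL_general (p q l : ℕ) (hp : 0 < p) (hpq : p < q)
    (hτ : 2^(2*l-1) ≤ 3*p+3*q) :
    (cornerAb p q (2^(2*l-1))).rank = (cornerA p q (2^(2*l-1))).rank ↔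
      p ∈ GammaL l ∨ q ∈ GammaL l := by
  have hodd : Odd 3 := by decide
  rw [Matrix.rank_eq_rank_iff_mem_span_cols (range_cornerAb_col _ _ _),
    cornerb_mem_span_cornerA_col_iff hp hpq (by positivity) hτ,
    X_pow_two_pow_add_one_dvd_mul_iff, Nat.odd_mul_modEq_two_pow_iff hodd,
    Nat.odd_mul_modEq_two_pow_iff hodd, mem_GammaL_iff, mem_GammaL_iff]

theorem rank_eq_iff_mem_GammaL (p q l : ℕ) (hp : 0 < p) (hpq : p < q)
    (hco : Nat.Coprime p q) (hl : 0 < l) (hτ : 2^(2*l-1) ≤ 3*p+3*q) :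
    (cornerAb p q (2^(2*l-1))).rank = (cornerA p q (2^(2*l-1))).rank ↔
      p ∈ GammaL l ∨ q ∈ GammaL l :=
  rank_eq_iff_mem_GammaL_general p q l hp hpq hτ
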